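/- arXiv:0908.1586 — 2 statements merged into one kernel-verified Lean document; each statement's English description precedes it below -/
import Mathlib

section
/- A subset of ℝ_max^n is a max-plus polyhedron (i.e., an intersection of finitely many affine half-spaces) if, and only if, it is of the form co(Z) ⊕ cone(Y) for some finite subsets Z, Y of ℝ_max^n. -/
noncomputable section

/-- The max-plus (tropical) semiring `ℝ ∪ {-∞}`:
addition is `max`, multiplication is `+` (with `-∞` absorbing). -/
abbrev Rmax : Type := WithBot ℝ

/-- A max-plus (tropical) cone: a set stable under max-plus linear combinations. -/
def IsTropCone {ι : Type} (V : Set (ι → Rmax)) : Prop :=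
  ∀ u ∈ V, ∀ w ∈ V, ∀ lam mu : Rmax, (fun i => max (lam + u i) (mu + w i)) ∈ V

/-- `tropCone X`: the set of all max-plus linear combinations of finitely many
elements of `X`. -/
def tropCone {ι : Type} (X : Set (ι → Rmax)) : Set (ι → Rmax) :=
  {x | ∃ (m : ℕ) (lam : Fin m → Rmax) (w : Fin m → ι → Rmax),
        (∀ s, w s ∈ X) ∧ x = fun i => Finset.univ.sup (fun s => lam s + w s i)}

/-- `tropCo X`: max-plus convex combinations (coefficients with maximum `0 = 𝟙`)
of finitely many elements of `X`. -/
def tropCo {ι : Type} (X : Set (ι → Rmax)) : Set (ι → Rmax) :=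
  {x | ∃ (m : ℕ) (lam : Fin m → Rmax) (w : Fin m → ι → Rmax),
        (∀ s, w s ∈ X) ∧ Finset.univ.sup lam = (0 : Rmax) ∧
        x = fun i => Finset.univ.sup (fun s => lam s + w s i)}

/-- Max-plus Minkowski sum of two subsets. -/
def tropSum {ι : Type} (A B : Set (ι → Rmax)) : Set (ι → Rmax) :=
  {z | ∃ a ∈ A, ∃ b ∈ B, z = fun i => max (a i) (b i)}

/-- A half-space of `ℝ_max^ι`. -/
def IsHalfSpace {ι : Type} [Fintype ι] (H : Set (ι → Rmax)) : Prop :=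
  ∃ a b : ι → Rmax,
    H = {x | Finset.univ.sup (fun i => a i + x i) ≤ Finset.univ.sup (fun j => b j + x j)}

/-- An affine half-space of `ℝ_max^ι`. -/
def IsAffineHalfSpace {ι : Type} [Fintype ι] (H : Set (ι → Rmax)) : Prop :=
  ∃ (a b : ι → Rmax) (c d : Rmax),
    H = {x | max (Finset.univ.sup (fun i => a i + x i)) c ≤
             max (Finset.univ.sup (fun j => b j + x j)) d}

/-- A max-plus polyhedron: an intersection of finitely many affine half-spaces. -/
def IsPolyhedron {ι : Type} [Fintype ι] (C : Set (ι → Rmax)) : Prop :=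
  ∃ (m : ℕ) (H : Fin m → Set (ι → Rmax)),
    (∀ k, IsAffineHalfSpace (H k)) ∧ C = ⋂ k, H k

/-- The recession cone of a max-plus convex set. -/
def recessionCone {ι : Type} (C : Set (ι → Rmax)) : Set (ι → Rmax) :=
  {u | ∃ x ∈ C, ∀ lam : Rmax, (fun i => max (x i) (lam + u i)) ∈ C}

/-- A half-space minimal (for inclusion) among the half-spaces containing `V`. -/
def IsMinimalHalfSpace {ι : Type} [Fintype ι] (V H : Set (ι → Rmax)) : Prop :=
  IsHalfSpace H ∧ V ⊆ H ∧ ¬ ∃ H', IsHalfSpace H' ∧ V ⊆ H' ∧ H' ⊂ H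

/-- The half-space written in normal form: `max_{i ∈ I} (a i + x i) ≤ max_{j ∈ J} (a j + x j)`
(the sup over an empty index set being `⊥ = -∞`). -/
def halfSpace {ι : Type} (I J : Finset ι) (a : ι → ℝ) : Set (ι → Rmax) :=
  {x | I.sup (fun i => ((a i : Rmax)) + x i) ≤ J.sup (fun j => ((a j : Rmax)) + x j)}

/-- The max-plus cone generated by the vectors `v 0, …, v (p-1)` (finite entries). -/
def genCone {ι : Type} [Fintype ι] {p : ℕ} (v : Fin p → ι → ℝ) : Set (ι → Rmax) :=
  {x | ∃ lam : Fin p → Rmax, x = fun i => Finset.univ.sup (fun r => lam r + ((v r i : Rmax)))}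

/-- `S_j(x)`: the `j`-th component of the type of `x` relative to the generators `v`. -/
def typeSet {ι : Type} {p : ℕ} (v : Fin p → ι → ℝ) (x : ι → ℝ) (j : ι) : Set (Fin p) :=
  {r | v r j - x j = ⨆ k, (v r k - x k)}

/-- `V` has full support. -/
def HasFullSupport {ι : Type} (V : Set (ι → Rmax)) : Prop :=
  ∀ k : ι, ∃ v ∈ V, v k ≠ ⊥

/-- `x` is a vertex of the natural cell decomposition induced by the generators `v`:
the cell of `type(x)` consists exactly of the (finite) scalar multiples of `x`. -/
def IsVertex {ι : Type} {p : ℕ} (v : Fin p → ι → ℝ) (x : ι → ℝ) : Prop :=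
  {y : ι → ℝ | ∀ j, typeSet v x j ⊆ typeSet v y j} = {y | ∃ c : ℝ, y = fun i => c + x i}

/-- The `i`-th max-plus unit vector. -/
def unitVec {ι : Type} [DecidableEq ι] (i : ι) : ι → Rmax :=
  fun k => if k = i then (0 : Rmax) else ⊥

/-- The vector `⊕_{j ∈ J} b j ⊙ e^j`. -/
def jVec {ι : Type} [DecidableEq ι] (J : Finset ι) (b : ι → ℝ) : ι → Rmax :=
  fun k => if k ∈ J then ((b k : Rmax)) else ⊥

/-- The polar of a max-plus cone: the set of (pairs defining) half-spaces containing it. -/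
def polar {ι : Type} [Fintype ι] (V : Set (ι → Rmax)) : Set ((ι → Rmax) × (ι → Rmax)) :=
  {q | ∀ x ∈ V, Finset.univ.sup (fun i => q.1 i + x i) ≤ Finset.univ.sup (fun j => q.2 j + x j)}

/-- Extreme vector of a max-plus cone of pairs (e.g. the polar). -/
def IsExtremePair {ι : Type} (W : Set ((ι → Rmax) × (ι → Rmax)))
    (z : (ι → Rmax) × (ι → Rmax)) : Prop :=
  z ∈ W ∧ z ≠ (fun _ => (⊥ : Rmax), fun _ => (⊥ : Rmax)) ∧
    ∀ u ∈ W, ∀ w ∈ W,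
      z = (fun i => max (u.1 i) (w.1 i), fun i => max (u.2 i) (w.2 i)) → z = u ∨ z = w

/-- Extreme point of a max-plus convex set. -/
def IsExtremePoint {ι : Type} (C : Set (ι → Rmax)) (z : ι → Rmax) : Prop :=
  z ∈ C ∧ ∀ u ∈ C, ∀ w ∈ C, ∀ lam mu : Rmax, max lam mu = (0 : Rmax) →
    z = (fun i => max (lam + u i) (mu + w i)) → z = u ∨ z = w

/-- Extreme vector of a max-plus cone. -/
def IsExtremeVector {ι : Type} (W : Set (ι → Rmax)) (z : ι → Rmax) : Prop :=
  z ∈ W ∧ z ≠ (fun _ => (⊥ : Rmax)) ∧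
    ∀ u ∈ W, ∀ w ∈ W, z = (fun i => max (u i) (w i)) → z = u ∨ z = w

/-- Projection of a subset of `ℝ_max^ι` onto the coordinates indexed by `K`. -/
def projCone {ι : Type} (K : Finset ι) (V : Set (ι → Rmax)) :
    Set ({k : ι // k ∈ K} → Rmax) :=
  {y | ∃ x ∈ V, y = fun k => x k.1}

/-!
Both sides are homogenized in one more coordinate: an affine half-space in `x` is a homogeneous
half-space in `(x, 0)`, and `co(Z) ⊕ cone(Y)` is the slice at height `0` of the cone generated by
the vectors `(z, 0)` and `(y, -∞)`. It then remains to show that a cone is cut out by finitely many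
homogeneous half-spaces iff it is finitely generated.

Intersecting a finitely generated cone with a half-space `a·x ≤ b·x` gives a finitely generated
cone: keep the generators `g` inside and add, for every `g` inside and `h` outside, the vector
`(a·h) ⊙ g ⊕ (b·g) ⊙ h`, a max-plus Fourier–Motzkin elimination step. Conversely, `x` lies in the
cone generated by `g₁, …, g_p` iff `x ≤ ⊕_r λ_r ⊙ g_r` for the largest admissible coefficients
`λ_r = min_j (x_j - g_{r j})`, and distributing the minima over the maximum turns this into
finitely many half-space inequalities.
-/
namespace MaxPlus

open Finset

section Scalars

variable {β : Type*}

lemma add_finsetSup (c : Rmax) (s : Finset β) (f : β → Rmax) :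
    c + s.sup f = s.sup fun b => c + f b :=
  apply_sup_eq_sup_comp (c + ·) (fun _ _ => add_max _ _ _) (WithBot.add_bot c)

lemma finsetSup_add (s : Finset β) (f : β → Rmax) (c : Rmax) :
    s.sup f + c = s.sup fun b => f b + c := by
  simpa only [add_comm] using add_finsetSup c s f

lemma sup_equivFin {α : Type*} [SemilatticeSup α] [OrderBot α] (T : Finset β) (f : β → α) :
    univ.sup (fun k => f (T.equivFin.symm k)) = T.sup f := by
  calc univ.sup (fun k => f (T.equivFin.symm k))
      = (univ.map T.equivFin.symm.toEmbedding).sup fun t : T => f t := by rw [sup_map]; rfl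
    _ = T.sup f := by rw [map_univ_equiv, univ_eq_attach, sup_attach]

lemma sup_fin_append {α : Type*} [SemilatticeSup α] [OrderBot α] {m k : ℕ} (f : Fin m → α)
    (g : Fin k → α) : univ.sup (Fin.append f g) = univ.sup f ⊔ univ.sup g := by
  apply le_antisymm
  · refine Finset.sup_le fun t _ => ?_
    induction t using Fin.addCases with
    | left s => simpa using le_sup_of_le_left (le_sup (f := f) (mem_univ s))
    | right s => simpa using le_sup_of_le_right (le_sup (f := g) (mem_univ s))
  · refine _root_.sup_le (Finset.sup_le fun s _ => ?_) (Finset.sup_le fun s _ => ?_)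
    · simpa using le_sup (f := Fin.append f g) (mem_univ (Fin.castAdd k s))
    · simpa using le_sup (f := Fin.append f g) (mem_univ (Fin.natAdd m s))

lemma sup_ite_add [Fintype β] [DecidableEq β] (b : β) (c : Rmax) (x : β → Rmax) :
    univ.sup (fun k => (if k = b then c else ⊥) + x k) = c + x b := by
  apply le_antisymm
  · refine Finset.sup_le fun k _ => ?_
    split_ifs with h
    · rw [h]
    · simp
  · simpa using le_sup (f := fun k => (if k = b then c else ⊥) + x k) (mem_univ b)

/-- The max-plus inverse of `c ≠ ⊥`, extended by `neg ⊥ = ⊥`. -/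
def neg (c : Rmax) : Rmax := WithBot.map (fun γ : ℝ => -γ) c

lemma add_neg_cancel_of_ne_bot {c : Rmax} (hc : c ≠ ⊥) : c + neg c = 0 := by
  obtain ⟨γ, rfl⟩ := WithBot.ne_bot_iff_exists.mp hc
  rw [neg, WithBot.map_coe, ← WithBot.coe_add, add_neg_cancel, WithBot.coe_zero]

lemma neg_add_cancel_of_ne_bot {c : Rmax} (hc : c ≠ ⊥) : neg c + c = 0 := by
  rw [add_comm, add_neg_cancel_of_ne_bot hc]

lemma add_neg_nonpos {u c : Rmax} (h : u ≤ c) : u + neg c ≤ 0 := by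
  rcases eq_or_ne c ⊥ with rfl | hc
  · simp [le_bot_iff.mp h]
  · calc u + neg c ≤ c + neg c := by gcongr
      _ = 0 := add_neg_cancel_of_ne_bot hc

lemma exists_le_and_attains_sup {ι : Type*} [Fintype ι] {lam pa pb : ι → Rmax}
    (h : univ.sup (fun r => lam r + pa r) ≤ univ.sup fun r => lam r + pb r)
    {t : ι} (ht : pb t < pa t) (hlt : lam t ≠ ⊥) :
    ∃ r, pa r ≤ pb r ∧ lam r + pb r = univ.sup (fun r => lam r + pb r) ∧ lam r + pb r ≠ ⊥ := by
  obtain ⟨r, -, hr⟩ := exists_mem_eq_sup univ ⟨t, mem_univ t⟩ fun r => lam r + pb r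
  have hsup : ∀ s, lam s + pa s ≤ lam r + pb r := fun s =>
    (le_sup (f := fun r => lam r + pa r) (mem_univ s)).trans (h.trans hr.le)
  have hne : lam r + pb r ≠ ⊥ :=
    ne_bot_of_le_ne_bot (WithBot.add_ne_bot.2 ⟨hlt, ne_bot_of_gt ht⟩) (hsup t)
  refine ⟨r, not_lt.1 fun hr' => ?_, hr.symm, hne⟩
  exact (WithBot.add_lt_add_left (WithBot.add_ne_bot.1 hne).1 hr').not_ge (hsup r)

end Scalars

section Cones

variable {β : Type*} {κ : Type}

lemma subset_tropCone (X : Set (κ → Rmax)) : X ⊆ tropCone X := fun x hx =>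
  ⟨1, fun _ => 0, fun _ => x, fun _ => hx, by simp⟩

lemma bot_mem_tropCone (X : Set (κ → Rmax)) : (fun _ => ⊥) ∈ tropCone X :=
  ⟨0, Fin.elim0, Fin.elim0, fun s => s.elim0, by simp⟩

lemma isTropCone_tropCone (X : Set (κ → Rmax)) : IsTropCone (tropCone X) := by
  rintro _ ⟨m, lam, v, hv, rfl⟩ _ ⟨k, mu, w, hw, rfl⟩ c d
  refine ⟨m + k, Fin.append (fun s => c + lam s) (fun s => d + mu s), Fin.append v w,
    fun t => ?_, funext fun i => ?_⟩
  · induction t using Fin.addCases <;> simp [hv, hw]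
  · rw [add_finsetSup, add_finsetSup, ← sup_fin_append]
    congr 1
    funext t
    induction t using Fin.addCases <;> simp [add_assoc]

lemma IsTropCone.smul_mem {V : Set (κ → Rmax)} (hV : IsTropCone V) {v : κ → Rmax} (hv : v ∈ V)
    (c : Rmax) : (fun i => c + v i) ∈ V := by
  simpa using hV v hv v hv c ⊥

lemma IsTropCone.finset_sup_mem {V : Set (κ → Rmax)} (hV : IsTropCone V)
    (h0 : (fun _ => ⊥) ∈ V) {T : Finset β} {lam : β → Rmax} {w : β → κ → Rmax}
    (hw : ∀ t ∈ T, w t ∈ V) : (fun i => T.sup fun t => lam t + w t i) ∈ V := by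
  classical
  induction T using Finset.induction_on with
  | empty => simpa using h0
  | insert a T _ ih =>
    have := hV _ (hw a (mem_insert_self a T)) _
      (ih fun t ht => hw t (mem_insert_of_mem ht)) (lam a) 0
    simpa [sup_insert] using this

lemma IsTropCone.inter {V W : Set (κ → Rmax)} (hV : IsTropCone V) (hW : IsTropCone W) :
    IsTropCone (V ∩ W) :=
  fun u hu w hw c d => ⟨hV u hu.1 w hw.1 c d, hW u hu.2 w hw.2 c d⟩

lemma IsTropCone.finset_sup_mem_of_between {V : Set (κ → Rmax)} (hV : IsTropCone V)
    (h0 : (fun _ => ⊥) ∈ V) {T : Finset β} {f : β → κ → Rmax}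
    (h : ∀ t ∈ T, ∃ z ∈ V, f t ≤ z ∧ z ≤ fun i => T.sup fun t => f t i) :
    (fun i => T.sup fun t => f t i) ∈ V := by
  choose! z hzV hfz hzx using h
  convert IsTropCone.finset_sup_mem hV h0 (lam := fun _ => 0) hzV using 2 with i
  simp only [zero_add]
  exact le_antisymm (sup_mono_fun fun t ht => hfz t ht i) (Finset.sup_le fun t ht => hzx t ht i)

lemma tropCone_subset_of_isTropCone {X V : Set (κ → Rmax)} (hV : IsTropCone V)
    (h0 : (fun _ => ⊥) ∈ V) (hX : X ⊆ V) : tropCone X ⊆ V := by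
  rintro _ ⟨m, lam, w, hw, rfl⟩
  exact IsTropCone.finset_sup_mem hV h0 fun s _ => hX (hw s)

lemma tropCone_subset_tropCone {X Y : Set (κ → Rmax)} (h : X ⊆ tropCone Y) :
    tropCone X ⊆ tropCone Y :=
  tropCone_subset_of_isTropCone (isTropCone_tropCone Y) (bot_mem_tropCone Y) h

lemma finset_sup_mem_tropCone {X : Set (κ → Rmax)} {T : Finset β} {lam : β → Rmax}
    {w : β → κ → Rmax} (hw : ∀ t ∈ T, w t ∈ X) :
    (fun i => T.sup fun t => lam t + w t i) ∈ tropCone X :=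
  IsTropCone.finset_sup_mem (isTropCone_tropCone X) (bot_mem_tropCone X)
    fun t ht => subset_tropCone X (hw t ht)

lemma finset_sup_mem_tropCo {Z : Set (κ → Rmax)} {T : Finset β} {lam : β → Rmax}
    {w : β → κ → Rmax} (hw : ∀ t ∈ T, w t ∈ Z) (hlam : T.sup lam = 0) :
    (fun i => T.sup fun t => lam t + w t i) ∈ tropCo Z :=
  ⟨T.card, fun k => lam (T.equivFin.symm k), fun k => w (T.equivFin.symm k),
    fun k => hw _ (T.equivFin.symm k).2, by rw [sup_equivFin, hlam],
    funext fun i => (sup_equivFin T fun t => lam t + w t i).symm⟩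

lemma tropCone_diff_bot (X : Set (κ → Rmax)) :
    tropCone (X \ {fun _ => ⊥}) = tropCone X := by
  refine (tropCone_subset_tropCone (Set.sdiff_subset.trans (subset_tropCone X))).antisymm
    (tropCone_subset_tropCone fun x hx => ?_)
  by_cases hbot : x = fun _ => ⊥
  · rw [hbot]
    exact bot_mem_tropCone _
  · exact subset_tropCone _ ⟨hx, hbot⟩

end Cones

section HalfSpaces

variable {β : Type*} {κ : Type} [Fintype κ]

def dot (a x : κ → Rmax) : Rmax := univ.sup fun i => a i + x i

lemma dot_max_add (a u w : κ → Rmax) (c d : Rmax) :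
    dot a (fun i => max (c + u i) (d + w i)) = max (c + dot a u) (d + dot a w) := by
  simp only [dot, add_finsetSup, add_max, add_left_comm (a _)]
  exact sup_sup (f := fun i => c + (a i + u i)) (g := fun i => d + (a i + w i))

lemma dot_finsetSup (a : κ → Rmax) (T : Finset β) (lam : β → Rmax) (w : β → κ → Rmax) :
    dot a (fun i => T.sup fun t => lam t + w t i) = T.sup fun t => lam t + dot a (w t) := by
  simp only [dot, add_finsetSup]
  rw [Finset.sup_comm]
  exact sup_congr rfl fun t _ => sup_congr rfl fun i _ => add_left_comm _ _ _

lemma isTropCone_of_isHalfSpace {H : Set (κ → Rmax)} (hH : IsHalfSpace H) : IsTropCone H := by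
  obtain ⟨a, b, rfl⟩ := hH
  intro u hu w hw c d
  change dot a _ ≤ dot b _
  rw [dot_max_add, dot_max_add]
  exact max_le_max (add_le_add le_rfl hu) (add_le_add le_rfl hw)

lemma bot_mem_of_isHalfSpace {H : Set (κ → Rmax)} (hH : IsHalfSpace H) : (fun _ => ⊥) ∈ H := by
  obtain ⟨a, b, rfl⟩ := hH
  simp

lemma isHalfSpace_le_sup [Fintype β] (i : κ) (c : β → Rmax) (φ : β → κ) :
    IsHalfSpace {x : κ → Rmax | x i ≤ univ.sup fun g => c g + x (φ g)} := by
  classical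
  refine ⟨unitVec i, fun j => univ.sup fun g => if j = φ g then c g else ⊥, ?_⟩
  ext x
  simp only [Set.mem_ofPred_eq, unitVec, sup_ite_add, zero_add, finsetSup_add]
  rw [Finset.sup_comm]
  simp only [sup_ite_add]

end HalfSpaces

section Elimination

variable {κ : Type} [Fintype κ]

/-- The max-plus analogue of a Fourier–Motzkin combination: for `g` in the half-space
`dot a ≤ dot b` and `h` outside it, this vector lies on its boundary. -/
def elimVec (a b g h : κ → Rmax) : κ → Rmax := fun i => max (dot a h + g i) (dot b g + h i)

def elimGens (X : Set (κ → Rmax)) (a b : κ → Rmax) : Set (κ → Rmax) :=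
  {g ∈ X | dot a g ≤ dot b g} ∪ (fun p : (κ → Rmax) × (κ → Rmax) => elimVec a b p.1 p.2) ''
    ({g ∈ X | dot a g ≤ dot b g} ×ˢ {h ∈ X | dot b h < dot a h})

lemma dot_elimVec_le {a b g : κ → Rmax} (hg : dot a g ≤ dot b g) (h : κ → Rmax) :
    dot a (elimVec a b g h) ≤ dot b (elimVec a b g h) := by
  unfold elimVec
  rw [dot_max_add, dot_max_add]
  exact max_le (le_max_of_le_left (add_le_add le_rfl hg)) (le_max_of_le_left (add_comm _ _).le)

lemma tropCone_elimGens_subset (X : Set (κ → Rmax)) (a b : κ → Rmax) :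
    tropCone (elimGens X a b) ⊆ tropCone X ∩ {x | dot a x ≤ dot b x} := by
  have hH : IsHalfSpace {x : κ → Rmax | dot a x ≤ dot b x} := ⟨a, b, rfl⟩
  refine tropCone_subset_of_isTropCone
    (IsTropCone.inter (isTropCone_tropCone X) (isTropCone_of_isHalfSpace hH))
    ⟨bot_mem_tropCone X, bot_mem_of_isHalfSpace hH⟩ ?_
  rintro _ (⟨hg, hga⟩ | ⟨⟨g, h⟩, ⟨⟨hg, hga⟩, hh, -⟩, rfl⟩)
  · exact ⟨subset_tropCone X hg, hga⟩
  · exact ⟨isTropCone_tropCone X g (subset_tropCone X hg) h (subset_tropCone X hh) _ _,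
      dot_elimVec_le hga h⟩

/-- The term `lam t + w t` is recovered from `elimVec a b (w r) (w t)`, where `r` is an index
in the half-space at which `dot b x = sup_r (lam r + dot b (w r))` is attained. -/
lemma exists_mem_tropCone_elimGens_between {ι : Type*} [Fintype ι] {X : Set (κ → Rmax)}
    {a b : κ → Rmax} {lam : ι → Rmax} {w : ι → κ → Rmax} (hw : ∀ s, w s ∈ X)
    (hx : dot a (fun i => univ.sup fun s => lam s + w s i) ≤
      dot b (fun i => univ.sup fun s => lam s + w s i))
    {t : ι} (ht : dot b (w t) < dot a (w t)) :
    ∃ z ∈ tropCone (elimGens X a b), (fun i => lam t + w t i) ≤ z ∧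
      z ≤ fun i => univ.sup fun s => lam s + w s i := by
  classical
  rw [dot_finsetSup, dot_finsetSup] at hx
  set c := univ.sup fun s => lam s + dot b (w s)
  set P := univ.filter fun r => dot a (w r) ≤ dot b (w r)
  refine ⟨fun i => P.sup fun r => (lam r + lam t + neg c) + elimVec a b (w r) (w t) i,
    finset_sup_mem_tropCone fun r hr => Or.inr ⟨(w r, w t),
      ⟨⟨hw r, (mem_filter.1 hr).2⟩, hw t, ht⟩, rfl⟩, fun i => ?_, fun i => ?_⟩
  · rcases eq_or_ne (lam t) ⊥ with hlt | hlt
    · simp [hlt]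
    obtain ⟨r, hr, hrc, hne⟩ := exists_le_and_attains_sup hx ht hlt
    have hrc : lam r + dot b (w r) = c := hrc
    calc lam t + w t i = (lam r + lam t + neg c) + (dot b (w r) + w t i) := by
          rw [← hrc, show lam r + lam t + neg (lam r + dot b (w r)) + (dot b (w r) + w t i)
            = lam t + w t i + (lam r + dot b (w r) + neg (lam r + dot b (w r))) by ac_rfl,
            add_neg_cancel_of_ne_bot hne, add_zero]
      _ ≤ (lam r + lam t + neg c) + elimVec a b (w r) (w t) i :=
          add_le_add le_rfl (le_max_right _ _)
      _ ≤ _ := le_sup (f := fun r => (lam r + lam t + neg c) + elimVec a b (w r) (w t) i)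
          (mem_filter.2 ⟨mem_univ r, hr⟩)
  · refine Finset.sup_le fun r _ => ?_
    have hat : lam t + dot a (w t) + neg c ≤ 0 :=
      add_neg_nonpos ((le_sup (f := fun s => lam s + dot a (w s)) (mem_univ t)).trans hx)
    have hbr : lam r + dot b (w r) + neg c ≤ 0 :=
      add_neg_nonpos (le_sup (f := fun s => lam s + dot b (w s)) (mem_univ r))
    calc (lam r + lam t + neg c) + elimVec a b (w r) (w t) i
        = max ((lam t + dot a (w t) + neg c) + (lam r + w r i))
            ((lam r + dot b (w r) + neg c) + (lam t + w t i)) := by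
          unfold elimVec
          rw [add_max]
          congr 1 <;> ac_rfl
      _ ≤ max (0 + (lam r + w r i)) (0 + (lam t + w t i)) :=
          max_le_max (add_le_add hat le_rfl) (add_le_add hbr le_rfl)
      _ ≤ univ.sup fun s => lam s + w s i := by
          rw [zero_add, zero_add]
          exact max_le (le_sup (f := fun s => lam s + w s i) (mem_univ r))
            (le_sup (f := fun s => lam s + w s i) (mem_univ t))

theorem tropCone_inter_eq_tropCone_elimGens (X : Set (κ → Rmax)) (a b : κ → Rmax) :
    tropCone X ∩ {x | dot a x ≤ dot b x} = tropCone (elimGens X a b) := by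
  refine Set.Subset.antisymm ?_ (tropCone_elimGens_subset X a b)
  rintro _ ⟨⟨m, lam, w, hw, rfl⟩, hx⟩
  refine IsTropCone.finset_sup_mem_of_between (isTropCone_tropCone _) (bot_mem_tropCone _)
    fun t _ => ?_
  rcases lt_or_ge (dot b (w t)) (dot a (w t)) with ht | ht
  · exact exists_mem_tropCone_elimGens_between hw hx ht
  · exact ⟨_, IsTropCone.smul_mem (isTropCone_tropCone _) (subset_tropCone _ (Or.inl ⟨hw t, ht⟩))
      (lam t), le_rfl, fun i => le_sup (f := fun s => lam s + w s i) (mem_univ t)⟩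

end Elimination

section MinkowskiWeyl

variable {κ : Type} [Fintype κ]

def IsPolyhedralCone (V : Set (κ → Rmax)) : Prop :=
  ∃ S : Set (Set (κ → Rmax)), S.Finite ∧ (∀ H ∈ S, IsHalfSpace H) ∧ V = ⋂₀ S

def IsFGCone (V : Set (κ → Rmax)) : Prop := ∃ X : Set (κ → Rmax), X.Finite ∧ V = tropCone X

lemma isFGCone_univ : IsFGCone (Set.univ : Set (κ → Rmax)) := by
  classical
  refine ⟨Set.range unitVec, Set.finite_range _, (Set.eq_univ_of_forall fun x => ?_).symm⟩
  convert finset_sup_mem_tropCone (T := univ) (lam := x) fun j _ => Set.mem_range_self j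
    using 2 with i
  calc x i = univ.sup fun j => (if j = i then 0 else ⊥) + x j := by rw [sup_ite_add, zero_add]
    _ = univ.sup fun j => x j + unitVec j i := sup_congr rfl fun j _ => by
        by_cases h : j = i
        · simp [h, unitVec]
        · simp [h, Ne.symm h, unitVec]

lemma IsFGCone.inter_isHalfSpace {V H : Set (κ → Rmax)} (hV : IsFGCone V)
    (hH : IsHalfSpace H) : IsFGCone (V ∩ H) := by
  obtain ⟨X, hX, rfl⟩ := hV
  obtain ⟨a, b, rfl⟩ := hH
  refine ⟨elimGens X a b, ?_, tropCone_inter_eq_tropCone_elimGens X a b⟩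
  have hsep : ∀ p : (κ → Rmax) → Prop, {g ∈ X | p g}.Finite := fun p =>
    hX.subset (Set.sep_subset X p)
  exact (hsep _).union (((hsep _).prod (hsep _)).image _)

lemma IsPolyhedralCone.isFGCone {V : Set (κ → Rmax)} (hV : IsPolyhedralCone V) : IsFGCone V := by
  obtain ⟨S, hS, hH, rfl⟩ := hV
  induction S, hS using Set.Finite.induction_on with
  | empty => simpa using isFGCone_univ
  | @insert H S _ _ ih =>
    rw [Set.sInter_insert, Set.inter_comm]
    exact IsFGCone.inter_isHalfSpace (ih fun H' hH' => hH H' (Set.mem_insert_of_mem H hH'))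
      (hH H (Set.mem_insert H S))

/-- The largest coefficient `λ` with `λ + g ≤ x` is the minimum of `x j - g j` over the finite
coordinates of `g`; `φ` ranges over all choices of one such coordinate per generator, so the
inequalities on the right say that `x ≤ ⊕_g λ_g + g`. -/
lemma mem_tropCone_iff_forall_le_sup {s : Finset (κ → Rmax)} (hs : ∀ g ∈ s, ∃ j, g j ≠ ⊥)
    {x : κ → Rmax} :
    x ∈ tropCone (s : Set (κ → Rmax)) ↔ ∀ (i : κ) (φ : s → κ), (∀ g : s, g.1 (φ g) ≠ ⊥) →
      x i ≤ univ.sup fun g : s => g.1 i + neg (g.1 (φ g)) + x (φ g) := by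
  classical
  refine ⟨fun hx i φ hφ => ?_, fun h => ?_⟩
  · have hH := isHalfSpace_le_sup i (fun g : s => g.1 i + neg (g.1 (φ g))) φ
    refine tropCone_subset_of_isTropCone (isTropCone_of_isHalfSpace hH)
      (bot_mem_of_isHalfSpace hH) (fun g hg => ?_) hx
    refine le_trans ?_ (le_sup (f := fun g' : s => g'.1 i + neg (g'.1 (φ g')) + g (φ g'))
      (mem_univ ⟨g, hg⟩))
    rw [add_assoc, neg_add_cancel_of_ne_bot (hφ ⟨g, hg⟩), add_zero]
  · have hmin : ∀ g : s, ∃ j, g.1 j ≠ ⊥ ∧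
        ∀ k, g.1 k ≠ ⊥ → x j + neg (g.1 j) ≤ x k + neg (g.1 k) := by
      intro g
      obtain ⟨j, hj⟩ := hs g g.2
      obtain ⟨j, hj, hmin⟩ := exists_min_image (univ.filter fun k => g.1 k ≠ ⊥)
        (fun k => x k + neg (g.1 k)) ⟨j, mem_filter.2 ⟨mem_univ j, hj⟩⟩
      exact ⟨j, (mem_filter.1 hj).2, fun k hk => hmin k (mem_filter.2 ⟨mem_univ k, hk⟩)⟩
    choose φ hφ hmin using hmin
    have hle : ∀ (g : s) k, x (φ g) + neg (g.1 (φ g)) + g.1 k ≤ x k := by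
      intro g k
      rcases eq_or_ne (g.1 k) ⊥ with hk | hk
      · simp [hk]
      calc x (φ g) + neg (g.1 (φ g)) + g.1 k ≤ x k + neg (g.1 k) + g.1 k :=
            add_le_add (hmin g k hk) le_rfl
        _ = x k := by rw [add_assoc, neg_add_cancel_of_ne_bot hk, add_zero]
    have hx : x = fun i => univ.sup fun g : s => x (φ g) + neg (g.1 (φ g)) + g.1 i :=
      funext fun i => le_antisymm ((h i φ hφ).trans_eq (sup_congr rfl fun g _ => by ac_rfl))
        (Finset.sup_le fun g _ => hle g i)
    rw [hx]
    exact finset_sup_mem_tropCone fun g _ => g.2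

lemma isPolyhedralCone_tropCone {X : Set (κ → Rmax)} (hX : X.Finite) :
    IsPolyhedralCone (tropCone X) := by
  classical
  obtain ⟨s, hsX⟩ := (hX.sdiff (t := {fun _ => ⊥})).exists_finset_coe
  have hs : ∀ g ∈ s, ∃ j, g j ≠ ⊥ := fun g hg =>
    Function.ne_iff.1 (show g ∈ X \ {fun _ => ⊥} from hsX ▸ Finset.mem_coe.2 hg).2
  refine ⟨Set.range fun p : κ × {φ : s → κ // ∀ g : s, g.1 (φ g) ≠ ⊥} =>
      {x | x p.1 ≤ univ.sup fun g : s => g.1 p.1 + neg (g.1 (p.2.1 g)) + x (p.2.1 g)},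
    Set.finite_range _, ?_, ?_⟩
  · rintro _ ⟨p, rfl⟩
    exact isHalfSpace_le_sup _ _ _
  · ext x
    rw [← tropCone_diff_bot, ← hsX, mem_tropCone_iff_forall_le_sup hs]
    simp [Set.sInter_range]

theorem isPolyhedralCone_iff_isFGCone {V : Set (κ → Rmax)} :
    IsPolyhedralCone V ↔ IsFGCone V :=
  ⟨IsPolyhedralCone.isFGCone, fun ⟨_, hX, hV⟩ => hV ▸ isPolyhedralCone_tropCone hX⟩

end MinkowskiWeyl

section Homogenization

variable {n : ℕ}

lemma dot_snoc_zero (a : Fin (n + 1) → Rmax) (x : Fin n → Rmax) :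
    dot a (Fin.snoc x 0) = max (dot (Fin.init a) x) (a (Fin.last n)) := by
  apply le_antisymm
  · refine Finset.sup_le fun j _ => ?_
    induction j using Fin.lastCases with
    | last => simp
    | cast i => simpa [dot, Fin.init] using
        le_max_of_le_left (le_sup (f := fun i => Fin.init a i + x i) (mem_univ i))
  · refine max_le (Finset.sup_le fun i _ => ?_) ?_
    · simpa [dot, Fin.init] using
        le_sup (f := fun j => a j + Fin.snoc (α := fun _ => Rmax) x 0 j) (mem_univ i.castSucc)
    · simpa [dot] using
        le_sup (f := fun j => a j + Fin.snoc (α := fun _ => Rmax) x 0 j) (mem_univ (Fin.last n))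

lemma isAffineHalfSpace_iff {H : Set (Fin n → Rmax)} :
    IsAffineHalfSpace H ↔ ∃ H', IsHalfSpace H' ∧ H = (fun x => Fin.snoc x (0 : Rmax)) ⁻¹' H' := by
  constructor
  · rintro ⟨a, b, c, d, rfl⟩
    refine ⟨_, ⟨Fin.snoc a c, Fin.snoc b d, rfl⟩, ?_⟩
    ext x
    change _ ↔ dot _ _ ≤ dot _ _
    rw [dot_snoc_zero, dot_snoc_zero, Fin.init_snoc, Fin.init_snoc, Fin.snoc_last, Fin.snoc_last]
    rfl
  · rintro ⟨_, ⟨a, b, rfl⟩, rfl⟩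
    refine ⟨Fin.init a, Fin.init b, a (Fin.last n), b (Fin.last n), ?_⟩
    ext x
    change dot _ _ ≤ dot _ _ ↔ _
    rw [dot_snoc_zero, dot_snoc_zero]
    rfl

lemma isPolyhedron_iff {C : Set (Fin n → Rmax)} :
    IsPolyhedron C ↔ ∃ V, IsPolyhedralCone V ∧ C = (fun x => Fin.snoc x (0 : Rmax)) ⁻¹' V := by
  constructor
  · rintro ⟨m, H, hH, rfl⟩
    choose H' hH' hpre using fun k => isAffineHalfSpace_iff.1 (hH k)
    refine ⟨⋂₀ Set.range H', ⟨_, Set.finite_range H', Set.forall_mem_range.2 hH', rfl⟩, ?_⟩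
    rw [Set.sInter_range, Set.preimage_iInter]
    exact Set.iInter_congr hpre
  · rintro ⟨V, ⟨S, hS, hH, rfl⟩, rfl⟩
    obtain ⟨m, f, -, rfl⟩ := hS.fin_param
    refine ⟨m, fun k => _ ⁻¹' f k,
      fun k => isAffineHalfSpace_iff.2 ⟨f k, hH _ (Set.mem_range_self k), rfl⟩, ?_⟩
    rw [Set.sInter_range, Set.preimage_iInter]

lemma snoc_finsetSup {β : Type*} (T : Finset β) (lam : β → Rmax) (z : β → Fin n → Rmax)
    (e : Rmax) :
    (fun j => T.sup fun t => lam t + (Fin.snoc (z t) e : Fin (n + 1) → Rmax) j) =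
      Fin.snoc (fun i => T.sup fun t => lam t + z t i) (T.sup lam + e) := by
  funext j
  induction j using Fin.lastCases <;> simp [finsetSup_add]

def homogGens (Z Y : Set (Fin n → Rmax)) : Set (Fin (n + 1) → Rmax) :=
  (fun z => Fin.snoc z (0 : Rmax)) '' Z ∪ (fun y => Fin.snoc y (⊥ : Rmax)) '' Y

lemma snoc_mem_tropCone_homogGens_iff {Z Y : Set (Fin n → Rmax)} {x : Fin n → Rmax} :
    Fin.snoc x (0 : Rmax) ∈ tropCone (homogGens Z Y) ↔
      x ∈ tropSum (tropCo Z) (tropCone Y) := by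
  classical
  constructor
  · rintro ⟨m, lam, w, hw, hx⟩
    set T := univ.filter fun s => w s ∈ (fun z => Fin.snoc z (0 : Rmax)) '' Z
    have hZ : ∀ s ∈ T, Fin.snoc (Fin.init (w s)) (0 : Rmax) = w s ∧ Fin.init (w s) ∈ Z := by
      intro s hs
      obtain ⟨z, hz, hzs⟩ := (mem_filter.1 hs).2
      rw [← hzs, Fin.init_snoc]
      exact ⟨rfl, hz⟩
    have hY : ∀ s ∈ Tᶜ, Fin.snoc (Fin.init (w s)) (⊥ : Rmax) = w s ∧ Fin.init (w s) ∈ Y := by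
      intro s hs
      obtain ⟨z, hz, hzs⟩ | ⟨y, hy, hys⟩ := hw s
      · exact absurd (mem_filter.2 ⟨mem_univ s, z, hz, hzs⟩) (mem_compl.1 hs)
      · rw [← hys, Fin.init_snoc]
        exact ⟨rfl, hy⟩
    have hsplit : Fin.snoc x (0 : Rmax) = fun j =>
        max ((Fin.snoc (fun i => T.sup fun s => lam s + Fin.init (w s) i) (T.sup lam + 0) :
            Fin (n + 1) → Rmax) j)
          ((Fin.snoc (fun i => Tᶜ.sup fun s => lam s + Fin.init (w s) i) (Tᶜ.sup lam + ⊥) :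
            Fin (n + 1) → Rmax) j) := by
      rw [← snoc_finsetSup, ← snoc_finsetSup, hx]
      funext j
      rw [← union_compl T, sup_union]
      exact congrArg₂ max (sup_congr rfl fun s hs => by rw [(hZ s hs).1])
        (sup_congr rfl fun s hs => by rw [(hY s hs).1])
    have hT : T.sup lam = 0 := by
      simpa using (congrFun hsplit (Fin.last n)).symm
    refine ⟨_, finset_sup_mem_tropCo (fun s hs => (hZ s hs).2) hT, _,
      finset_sup_mem_tropCone (lam := lam) fun s hs => (hY s hs).2, funext fun i => ?_⟩
    simpa using congrFun hsplit i.castSucc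
  · rintro ⟨_, ⟨m, mu, z, hz, hmu, rfl⟩, _, ⟨k, lam, y, hy, rfl⟩, rfl⟩
    have hu := finset_sup_mem_tropCone (T := univ) (lam := mu) (X := homogGens Z Y)
      (w := fun s => Fin.snoc (z s) (0 : Rmax)) fun s _ => Or.inl ⟨z s, hz s, rfl⟩
    have hv := finset_sup_mem_tropCone (T := univ) (lam := lam) (X := homogGens Z Y)
      (w := fun s => Fin.snoc (y s) (⊥ : Rmax)) fun s _ => Or.inr ⟨y s, hy s, rfl⟩
    rw [snoc_finsetSup, hmu, add_zero] at hu
    rw [snoc_finsetSup, WithBot.add_bot] at hv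
    convert isTropCone_tropCone _ _ hu _ hv 0 0 using 1
    funext j
    induction j using Fin.lastCases <;> simp

lemma exists_tropCone_eq_tropCone_homogGens {W : Set (Fin (n + 1) → Rmax)} (hW : W.Finite) :
    ∃ Z Y : Set (Fin n → Rmax), Z.Finite ∧ Y.Finite ∧ tropCone W = tropCone (homogGens Z Y) := by
  set dehom : (Fin (n + 1) → Rmax) → Fin n → Rmax := fun w i => neg (w (Fin.last n)) + Fin.init w i
  refine ⟨dehom '' {w ∈ W | w (Fin.last n) ≠ ⊥}, Fin.init '' {w ∈ W | w (Fin.last n) = ⊥},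
    (hW.subset (Set.sep_subset _ _)).image _, (hW.subset (Set.sep_subset _ _)).image _, ?_⟩
  have hdehom : ∀ w : Fin (n + 1) → Rmax, w (Fin.last n) ≠ ⊥ →
      Fin.snoc (dehom w) (0 : Rmax) = fun j => neg (w (Fin.last n)) + w j := by
    intro w hw
    funext j
    induction j using Fin.lastCases with
    | last => simp [neg_add_cancel_of_ne_bot hw]
    | cast i => simp [dehom, Fin.init]
  refine (tropCone_subset_tropCone fun w hw => ?_).antisymm (tropCone_subset_tropCone ?_)
  · rcases eq_or_ne (w (Fin.last n)) ⊥ with hl | hl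
    · refine subset_tropCone _ (Set.mem_union_right _ ⟨Fin.init w, ⟨w, ⟨hw, hl⟩, rfl⟩, ?_⟩)
      beta_reduce
      rw [← hl, Fin.snoc_init_self]
    · have hw' : w = fun j => w (Fin.last n) + (Fin.snoc (dehom w) 0 : Fin (n + 1) → Rmax) j := by
        funext j
        rw [congrFun (hdehom w hl) j, ← add_assoc, add_neg_cancel_of_ne_bot hl, zero_add]
      rw [hw']
      exact IsTropCone.smul_mem (isTropCone_tropCone _)
        (subset_tropCone _ (Set.mem_union_left _ (by exact ⟨dehom w, ⟨w, ⟨hw, hl⟩, rfl⟩, rfl⟩))) _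
  · rintro _ (⟨_, ⟨w, ⟨hw, hl⟩, rfl⟩, rfl⟩ | ⟨_, ⟨w, ⟨hw, hl⟩, rfl⟩, rfl⟩)
    · beta_reduce
      rw [hdehom w hl]
      exact IsTropCone.smul_mem (isTropCone_tropCone W) (subset_tropCone W hw) _
    · beta_reduce
      rw [← hl, Fin.snoc_init_self]
      exact subset_tropCone W hw

lemma exists_eq_tropSum_iff {C : Set (Fin n → Rmax)} :
    (∃ Z Y : Set (Fin n → Rmax), Z.Finite ∧ Y.Finite ∧ C = tropSum (tropCo Z) (tropCone Y)) ↔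
      ∃ V, IsFGCone V ∧ C = (fun x => Fin.snoc x (0 : Rmax)) ⁻¹' V := by
  constructor
  · rintro ⟨Z, Y, hZ, hY, rfl⟩
    refine ⟨_, ⟨homogGens Z Y, (hZ.image _).union (hY.image _), rfl⟩, ?_⟩
    ext x
    exact snoc_mem_tropCone_homogGens_iff.symm
  · rintro ⟨_, ⟨W, hW, rfl⟩, rfl⟩
    obtain ⟨Z, Y, hZ, hY, hWZY⟩ := exists_tropCone_eq_tropCone_homogGens hW
    refine ⟨Z, Y, hZ, hY, ?_⟩
    ext x
    rw [Set.mem_preimage, hWZY]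
    exact snoc_mem_tropCone_homogGens_iff

end Homogenization

end MaxPlus

/-- a subset of `ℝ_max^n` is a max-plus polyhedron if, and only if,
it is of the form `co(Z) ⊕ cone(Y)` with `Z`, `Y` finite. -/
theorem stmt_1 {n : ℕ} (C : Set (Fin n → Rmax)) :
    IsPolyhedron C ↔
      ∃ Z Y : Set (Fin n → Rmax), Z.Finite ∧ Y.Finite ∧
        C = tropSum (tropCo Z) (tropCone Y) := by
  rw [MaxPlus.isPolyhedron_iff, MaxPlus.exists_eq_tropSum_iff]
  simp only [MaxPlus.isPolyhedralCone_iff_isFGCone]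
end
end

section
/- Let V ⊆ ℝ_max^n be a max-plus cone with full support. If V is contained in a half-space H, then there exists a half-space H' with V ⊆ H' ⊆ H such that H' is minimal for inclusion among half-spaces containing V, i.e., there is no half-space H'' with V ⊆ H'' and H'' strictly contained in H'. -/
/-!
By Zorn's lemma it suffices that the intersection of a nonempty chain of half-spaces containing
`V` is again a half-space. Every such half-space is `halfSpace I J a` with `I`, `J` disjoint,
and one pattern `(I, J)` occurs coinitially along the chain. For a fixed pattern, inclusion
`halfSpace I J a' ⊆ halfSpace I J a` forces `a' j - a' i ≤ a j - a i` for `i ∈ I`, `j ∈ J`;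
normalizing the coefficients against a vector `u ∈ V` with finite entries (it exists by full
support) makes them increase on `I` as the half-space shrinks, and bounds them above. The
intersection of the chain is then the half-space with coefficients `sup a i` on `I` and
`liminf a j` on `J`, where a coefficient `-∞` on `J` simply drops that index.
-/

noncomputable section

theorem sup_le_sup_iff_forall_exists_le {α β : Type*} [LinearOrder α] [OrderBot α]
    {s t : Finset β} {f g : β → α} :
    s.sup f ≤ t.sup g ↔ ∀ i ∈ s, f i ≠ ⊥ → ∃ j ∈ t, f i ≤ g j := by
  simp only [Finset.sup_le_iff]
  refine forall₂_congr fun i _ => ?_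
  rcases eq_bot_or_bot_lt (f i) with h | h
  · simp [h]
  · simp [Finset.le_sup_iff h, h.ne']

theorem mem_halfSpace_iff {ι : Type} {I J : Finset ι} {a : ι → ℝ} {x : ι → Rmax} :
    x ∈ halfSpace I J a ↔ ∀ i ∈ I, x i ≠ ⊥ → ∃ j ∈ J, (a i : Rmax) + x i ≤ a j + x j := by
  simp only [halfSpace, Set.mem_ofPred_eq, sup_le_sup_iff_forall_exists_le, ne_eq,
    WithBot.add_eq_bot, WithBot.coe_ne_bot, false_or]

theorem coe_mem_halfSpace_iff {ι : Type} {I J : Finset ι} {a x : ι → ℝ} :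
    (fun k => (x k : Rmax)) ∈ halfSpace I J a ↔ ∀ i ∈ I, ∃ j ∈ J, a i + x i ≤ a j + x j := by
  simp only [mem_halfSpace_iff, ne_eq, WithBot.coe_ne_bot, not_false_eq_true, forall_const]
  norm_cast

theorem halfSpace_add_const {ι : Type} (I J : Finset ι) (a : ι → ℝ) (r : ℝ) :
    halfSpace I J (fun k => a k + r) = halfSpace I J a := by
  ext x
  simp only [mem_halfSpace_iff, WithBot.coe_add, add_right_comm _ (r : Rmax),
    WithBot.add_le_add_iff_right WithBot.coe_ne_bot]

theorem exists_halfSpace_eq_normalized {ι : Type} (I J : Finset ι) (a u : ι → ℝ) :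
    ∃ a' : ι → ℝ, halfSpace I J a' = halfSpace I J a ∧ (∀ j ∈ J, a' j + u j ≤ 0) ∧
      (J.Nonempty → ∃ j ∈ J, a' j + u j = 0) := by
  rcases J.eq_empty_or_nonempty with rfl | hJ
  · exact ⟨a, rfl, by simp, by simp⟩
  set m := J.sup' hJ fun j => a j + u j
  refine ⟨fun k => a k + -m, halfSpace_add_const I J a _, fun j hj => ?_, fun _ => ?_⟩
  · have := J.le_sup' (fun j => a j + u j) hj
    linarith
  · obtain ⟨j, hj, hjm⟩ := J.exists_mem_eq_sup' hJ fun j => a j + u j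
    exact ⟨j, hj, by linarith⟩

theorem isHalfSpace_setOf_sup_le_sup {ι : Type} [Fintype ι] (I J : Finset ι) (a b : ι → Rmax) :
    IsHalfSpace {x | I.sup (fun i => a i + x i) ≤ J.sup (fun j => b j + x j)} := by
  classical
  refine ⟨fun i => if i ∈ I then a i else ⊥, fun j => if j ∈ J then b j else ⊥, ?_⟩
  ext x
  simp only [Set.mem_ofPred_eq, ite_add, WithBot.bot_add, Finset.sup_ite, Finset.sup_bot,
    sup_bot_eq, Finset.filter_mem_eq_inter, Finset.univ_inter]

theorem coe_unbotD_of_ne_bot {x : Rmax} (hx : x ≠ ⊥) : ((x.unbotD 0 : ℝ) : Rmax) = x := by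
  lift x to ℝ using hx
  rfl

theorem IsHalfSpace.exists_eq_halfSpace {ι : Type} [Fintype ι] {K : Set (ι → Rmax)}
    (hK : IsHalfSpace K) : ∃ (I J : Finset ι) (c : ι → ℝ), Disjoint I J ∧ K = halfSpace I J c := by
  classical
  obtain ⟨a, b, rfl⟩ := hK
  -- a term with `a k ≤ b k` is dominated on the right, one with `b k < a k` never attains the
  -- right-hand maximum at a point of the half-space
  set I := Finset.univ.filter fun i => b i < a i
  set J := Finset.univ.filter fun j => a j ≤ b j ∧ b j ≠ ⊥
  set c : ι → ℝ := fun k => if k ∈ I then (a k).unbotD 0 else (b k).unbotD 0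
  have hcI : ∀ i ∈ I, (c i : Rmax) = a i := fun i hi => by
    simp only [c, if_pos hi, coe_unbotD_of_ne_bot (Finset.mem_filter.1 hi).2.ne_bot]
  have hcJ : ∀ j ∈ J, (c j : Rmax) = b j := fun j hj => by
    obtain ⟨hab, hb⟩ := (Finset.mem_filter.1 hj).2
    simp only [c]
    rw [if_neg fun hI => (Finset.mem_filter.1 hI).2.not_ge hab, coe_unbotD_of_ne_bot hb]
  refine ⟨I, J, c, Finset.disjoint_filter.2 fun k _ hk hk' => hk.not_ge hk'.1, ?_⟩
  ext x
  rw [Set.mem_ofPred_eq, mem_halfSpace_iff]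
  constructor
  · intro hx i hi hxi
    obtain ⟨j, -, hj⟩ := Finset.exists_mem_eq_sup Finset.univ ⟨i, Finset.mem_univ i⟩
      fun j => b j + x j
    have hle : ∀ k, a k + x k ≤ b j + x j := fun k =>
      hj ▸ (Finset.le_sup (f := fun k => a k + x k) (Finset.mem_univ k)).trans hx
    obtain ⟨hbj, hxj⟩ := WithBot.add_ne_bot.1 <| ne_bot_of_le_ne_bot
      (WithBot.add_ne_bot.2 ⟨(Finset.mem_filter.1 hi).2.ne_bot, hxi⟩) (hle i)
    have hJ : j ∈ J :=
      Finset.mem_filter.2 ⟨Finset.mem_univ j, (WithBot.add_le_add_iff_right hxj).1 (hle j), hbj⟩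
    exact ⟨j, hJ, by rw [hcI i hi, hcJ j hJ]; exact hle i⟩
  · intro hx
    refine Finset.sup_le fun k _ => ?_
    rcases eq_or_ne (x k) ⊥ with hxk | hxk
    · simp [hxk]
    by_cases hk : k ∈ I
    · obtain ⟨j, hj, hkj⟩ := hx k hk hxk
      rw [hcI k hk, hcJ j hj] at hkj
      exact hkj.trans (Finset.le_sup (f := fun j => b j + x j) (Finset.mem_univ j))
    · have hab : a k ≤ b k := not_lt.1 fun h => hk (Finset.mem_filter.2 ⟨Finset.mem_univ k, h⟩)
      exact (add_le_add_left hab _).trans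
        (Finset.le_sup (f := fun j => b j + x j) (Finset.mem_univ k))

theorem add_le_add_of_halfSpace_subset {ι : Type} {I J : Finset ι} {a a' : ι → ℝ}
    (hIJ : Disjoint I J) (h : halfSpace I J a' ⊆ halfSpace I J a) {i j : ι} (hi : i ∈ I)
    (hj : j ∈ J) : a i + a' j ≤ a j + a' i := by
  classical
  have hji : j ≠ i := fun e => Finset.disjoint_left.1 hIJ hi (e ▸ hj)
  set x : ι → Rmax := fun k => if k = i then (a' j : Rmax) else if k = j then (a' i : Rmax) else ⊥
  have hx : x ∈ halfSpace I J a' := by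
    rw [mem_halfSpace_iff]
    intro k hk hxk
    have hki : k = i := by
      by_contra hki
      have hkj : k ≠ j := fun e => Finset.disjoint_left.1 hIJ hk (e ▸ hj)
      simp [x, hki, hkj] at hxk
    subst hki
    refine ⟨j, hj, ?_⟩
    simp [x, hji, add_comm]
  obtain ⟨j', hj', hle⟩ := mem_halfSpace_iff.1 (h hx) i hi (by simp [x])
  have hj'i : j' ≠ i := fun e => Finset.disjoint_left.1 hIJ hi (e ▸ hj')
  by_cases hj'j : j' = j
  · subst hj'j
    simp only [x, if_pos rfl, if_neg hj'i, if_true] at hle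
    exact_mod_cast hle
  · simp [x, hj'i, hj'j] at hle

theorem IsChain.exists_coinitial_fiber {α β : Type*} [Preorder α] [Finite β] {C : Set α}
    (hC : IsChain (· ≤ ·) C) (hne : C.Nonempty) (f : α → β) :
    ∃ b, ∀ x ∈ C, ∃ y ∈ C, y ≤ x ∧ f y = b := by
  by_contra! h
  choose g hgC hg using h
  obtain ⟨x₀, -⟩ := hne
  obtain ⟨_, ⟨b₀, rfl⟩, hmin⟩ :=
    (Set.finite_range g).exists_minimal (Set.range_nonempty_iff_nonempty.2 ⟨f x₀⟩)
  refine hg (f (g b₀)) (g b₀) (hgC b₀) ?_ rfl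
  rcases hC.total (hgC b₀) (hgC (f (g b₀))) with hle | hle
  · exact hle
  · exact hmin ⟨_, rfl⟩ hle

theorem IsTropCone.exists_coe_mem {ι : Type} [Fintype ι] {V : Set (ι → Rmax)} (hV : IsTropCone V)
    (hsupp : HasFullSupport V) (hne : V.Nonempty) : ∃ u : ι → ℝ, (fun i => (u i : Rmax)) ∈ V := by
  classical
  have key : ∀ s : Finset ι, ∃ w ∈ V, ∀ i ∈ s, w i ≠ ⊥ := by
    intro s
    induction s using Finset.induction_on with
    | empty => exact hne.imp fun w hw => ⟨hw, by simp⟩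
    | insert k s _ ih =>
      obtain ⟨w, hwV, hw⟩ := ih
      obtain ⟨v, hvV, hv⟩ := hsupp k
      refine ⟨_, hV w hwV v hvV 0 0, fun i hi => ?_⟩
      simp only [zero_add, ne_eq, max_eq_bot, not_and_or]
      rcases Finset.mem_insert.1 hi with rfl | his
      · exact Or.inr hv
      · exact Or.inl (hw i his)
  obtain ⟨w, hwV, hw⟩ := key Finset.univ
  refine ⟨fun i => (w i).unbotD 0, ?_⟩
  simpa only [coe_unbotD_of_ne_bot (hw _ (Finset.mem_univ _))] using hwV

theorem exists_coe_mem_of_hasFullSupport {ι : Type} [Fintype ι] {V : Set (ι → Rmax)}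
    (hV : IsTropCone V) (hsupp : HasFullSupport V) :
    ∃ u : ι → ℝ, ∀ K, IsHalfSpace K → V ⊆ K → (fun i => (u i : Rmax)) ∈ K := by
  rcases V.eq_empty_or_nonempty with rfl | hne
  · have : IsEmpty ι := ⟨fun k => by obtain ⟨v, hv, -⟩ := hsupp k; exact hv⟩
    refine ⟨0, fun K ⟨a, b, hK⟩ _ => ?_⟩
    simp [hK]
  · obtain ⟨u, hu⟩ := hV.exists_coe_mem hsupp hne
    exact ⟨u, fun K _ hVK => hVK hu⟩

structure NormalizedChain {ι : Type} (u : ι → ℝ) (I J : Finset ι) (D : Set (Set (ι → Rmax)))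
    (a : Set (ι → Rmax) → ι → ℝ) : Prop where
  disjoint : Disjoint I J
  isChain : IsChain (· ⊆ ·) D
  nonempty : D.Nonempty
  eq_halfSpace : ∀ K ∈ D, K = halfSpace I J (a K)
  coe_mem : ∀ K ∈ D, (fun k => (u k : Rmax)) ∈ K
  coeff_add_le : ∀ K ∈ D, ∀ j ∈ J, a K j + u j ≤ 0
  exists_coeff_add_eq : ∀ K ∈ D, J.Nonempty → ∃ j ∈ J, a K j + u j = 0

namespace NormalizedChain

variable {ι : Type} {u : ι → ℝ} {I J : Finset ι} {D : Set (Set (ι → Rmax))}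
  {a : Set (ι → Rmax) → ι → ℝ}

theorem exists_subset_subset (hN : NormalizedChain u I J D a) {K K' : Set (ι → Rmax)}
    (hK : K ∈ D) (hK' : K' ∈ D) : ∃ M ∈ D, M ⊆ K ∧ M ⊆ K' := by
  rcases hN.isChain.total hK hK' with h | h
  · exact ⟨K, hK, subset_rfl, h⟩
  · exact ⟨K', hK', h, subset_rfl⟩

theorem add_le_add_of_subset (hN : NormalizedChain u I J D a) {K K' : Set (ι → Rmax)}
    (hK : K ∈ D) (hK' : K' ∈ D) (hsub : K' ⊆ K) {i j : ι} (hi : i ∈ I) (hj : j ∈ J) :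
    a K i + a K' j ≤ a K j + a K' i :=
  add_le_add_of_halfSpace_subset hN.disjoint
    (by rw [← hN.eq_halfSpace K hK, ← hN.eq_halfSpace K' hK']; exact hsub) hi hj

theorem coeff_add_le_of_mem_left (hN : NormalizedChain u I J D a) {K : Set (ι → Rmax)}
    (hK : K ∈ D) {i : ι} (hi : i ∈ I) : a K i + u i ≤ 0 := by
  have hu := hN.coe_mem K hK
  rw [hN.eq_halfSpace K hK, coe_mem_halfSpace_iff] at hu
  obtain ⟨j, hj, hij⟩ := hu i hi
  linarith [hN.coeff_add_le K hK j hj]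

theorem coeff_le_of_subset (hN : NormalizedChain u I J D a) {K K' : Set (ι → Rmax)}
    (hK : K ∈ D) (hK' : K' ∈ D) (hsub : K' ⊆ K) {i : ι} (hi : i ∈ I) : a K i ≤ a K' i := by
  have hu := hN.coe_mem K' hK'
  rw [hN.eq_halfSpace K' hK', coe_mem_halfSpace_iff] at hu
  obtain ⟨j, hj, -⟩ := hu i hi
  obtain ⟨j₀, hj₀, hj₀eq⟩ := hN.exists_coeff_add_eq K' hK' ⟨j, hj⟩
  linarith [hN.coeff_add_le K hK j₀ hj₀, hN.add_le_add_of_subset hK hK' hsub hi hj₀]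

def supCoeff (D : Set (Set (ι → Rmax))) (a : Set (ι → Rmax) → ι → ℝ) (i : ι) : ℝ :=
  ⨆ K : D, a K i

/-- It is `⊥` when the coefficients are unbounded below along the chain. -/
def liminfCoeff (D : Set (Set (ι → Rmax))) (a : Set (ι → Rmax) → ι → ℝ) (j : ι) : Rmax :=
  ⨆ K : D, ⨅ K' : {K' : D // K'.1 ⊆ K.1}, (a K' j : Rmax)

def limit (I J : Finset ι) (D : Set (Set (ι → Rmax))) (a : Set (ι → Rmax) → ι → ℝ) :
    Set (ι → Rmax) :=
  {x | I.sup (fun i => (supCoeff D a i : Rmax) + x i) ≤ J.sup (fun j => liminfCoeff D a j + x j)}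

theorem le_supCoeff (hN : NormalizedChain u I J D a) {K : Set (ι → Rmax)} (hK : K ∈ D) {i : ι}
    (hi : i ∈ I) : a K i ≤ supCoeff D a i :=
  le_ciSup (f := fun K : D => a K i)
    ⟨-u i, Set.forall_mem_range.2 fun K => by linarith [hN.coeff_add_le_of_mem_left K.2 hi]⟩ ⟨K, hK⟩

theorem liminfCoeff_le (hN : NormalizedChain u I J D a) {K : Set (ι → Rmax)} (hK : K ∈ D)
    {i j : ι} (hi : i ∈ I) (hj : j ∈ J) :
    liminfCoeff D a j ≤ ((a K j - a K i + supCoeff D a i : ℝ) : Rmax) := by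
  have : Nonempty D := hN.nonempty.to_subtype
  refine ciSup_le fun K'' => ?_
  obtain ⟨M, hM, hMK, hMK''⟩ := hN.exists_subset_subset hK K''.2
  refine (ciInf_le (OrderBot.bddBelow _) ⟨⟨M, hM⟩, hMK''⟩).trans (WithBot.coe_le_coe.2 ?_)
  linarith [hN.add_le_add_of_subset hK hM hMK hi hj, hN.le_supCoeff hM hi]

theorem limit_subset (hN : NormalizedChain u I J D a) {K : Set (ι → Rmax)} (hK : K ∈ D) :
    limit I J D a ⊆ K := by
  intro x hx
  rw [hN.eq_halfSpace K hK, mem_halfSpace_iff]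
  intro i hi hxi
  obtain ⟨s, hs⟩ := WithBot.ne_bot_iff_exists.1 hxi
  rw [limit, Set.mem_ofPred_eq, sup_le_sup_iff_forall_exists_le] at hx
  obtain ⟨j, hj, hij⟩ := hx i hi (by simp [← hs])
  have hxj : x j ≠ ⊥ := by
    rintro hxj
    simp [hxj, ← hs] at hij
  obtain ⟨t, ht⟩ := WithBot.ne_bot_iff_exists.1 hxj
  have hle := hij.trans (add_le_add_left (hN.liminfCoeff_le hK hi hj) _)
  refine ⟨j, hj, ?_⟩
  rw [← hs, ← ht] at hle ⊢
  norm_cast at hle ⊢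
  linarith

theorem coe_le_liminfCoeff (hN : NormalizedChain u I J D a) {K : Set (ι → Rmax)} (hK : K ∈ D)
    {j : ι} (hj : j ∈ J) {r : ℝ} (hr : ∀ K' ∈ D, K' ⊆ K → r ≤ a K' j) :
    (r : Rmax) ≤ liminfCoeff D a j := by
  have : Nonempty {K' : D // K'.1 ⊆ K} := ⟨⟨⟨K, hK⟩, subset_rfl⟩⟩
  unfold liminfCoeff
  refine le_ciSup_of_le ⟨((-u j : ℝ) : Rmax), Set.forall_mem_range.2 fun K'' => ?_⟩ ⟨K, hK⟩
    (le_ciInf fun K' => WithBot.coe_le_coe.2 (hr K'.1 K'.1.2 K'.2))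
  refine (ciInf_le (OrderBot.bddBelow _) ⟨K'', subset_rfl⟩).trans (WithBot.coe_le_coe.2 ?_)
  linarith [hN.coeff_add_le K'' K''.2 j hj]

theorem sInter_subset_limit [Finite ι] (hN : NormalizedChain u I J D a) :
    ⋂₀ D ⊆ limit I J D a := by
  intro x hx
  rw [limit, Set.mem_ofPred_eq, sup_le_sup_iff_forall_exists_le]
  intro i hi hxi
  obtain ⟨s, hs⟩ := WithBot.ne_bot_iff_exists.1 (WithBot.add_ne_bot.1 hxi).2
  have hwit : ∀ K ∈ D, ∃ j ∈ J, ((a K i + s : ℝ) : Rmax) ≤ a K j + x j := fun K hK => by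
    have hxK := hx K hK
    rw [hN.eq_halfSpace K hK, mem_halfSpace_iff] at hxK
    simpa only [← hs, WithBot.coe_add] using hxK i hi (hs ▸ WithBot.coe_ne_bot)
  have : Nonempty ι := ⟨i⟩
  -- one index `j` serves along a coinitial part of the chain, hence everywhere, since
  -- `a K j - a K i` only decreases as `K` shrinks
  choose! g hgJ hg using hwit
  obtain ⟨j, hcoin⟩ := hN.isChain.exists_coinitial_fiber hN.nonempty g
  obtain ⟨K₀, hK₀⟩ := hN.nonempty
  obtain ⟨K₁, hK₁, -, hK₁j⟩ := hcoin K₀ hK₀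
  have hj : j ∈ J := hK₁j ▸ hgJ K₁ hK₁
  obtain ⟨t, ht⟩ : ∃ t : ℝ, (t : Rmax) = x j :=
    WithBot.ne_bot_iff_exists.1 fun h => by
      have h' := hg K₁ hK₁
      rw [hK₁j, h] at h'
      simp at h'
  have hall : ∀ K ∈ D, a K i + s ≤ a K j + t := fun K hK => by
    obtain ⟨K', hK', hsub, hK'j⟩ := hcoin K hK
    have h' := hg K' hK'
    rw [hK'j, ← ht] at h'
    norm_cast at h'
    linarith [hN.add_le_add_of_subset hK hK' hsub hi hj]
  have hlow : ∀ K ∈ D, ((a K i + s - t : ℝ) : Rmax) ≤ liminfCoeff D a j := fun K hK =>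
    hN.coe_le_liminfCoeff hK hj fun K' hK' hsub => by
      linarith [hall K' hK', hN.coeff_le_of_subset hK hK' hsub hi]
  obtain ⟨β, hβ⟩ := WithBot.ne_bot_iff_exists.1
    (ne_bot_of_le_ne_bot WithBot.coe_ne_bot (hlow K₀ hK₀))
  have : Nonempty D := ⟨⟨K₀, hK₀⟩⟩
  have hsup : supCoeff D a i ≤ β - s + t := ciSup_le fun K => by
    have h' := hlow K K.2
    rw [← hβ] at h'
    norm_cast at h'
    linarith
  refine ⟨j, hj, ?_⟩
  rw [← hs, ← ht, ← hβ]
  norm_cast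
  linarith

theorem isHalfSpace_sInter [Fintype ι] (hN : NormalizedChain u I J D a) :
    IsHalfSpace (⋂₀ D) := by
  rw [subset_antisymm hN.sInter_subset_limit (Set.subset_sInter fun K hK => hN.limit_subset hK)]
  exact isHalfSpace_setOf_sup_le_sup _ _ _ _

end NormalizedChain

theorem isHalfSpace_sInter_of_isChain {ι : Type} [Fintype ι] {C : Set (Set (ι → Rmax))}
    (hC : IsChain (· ⊆ ·) C) (hne : C.Nonempty) (hHS : ∀ K ∈ C, IsHalfSpace K) {u : ι → ℝ}
    (hu : ∀ K ∈ C, (fun i => (u i : Rmax)) ∈ K) : IsHalfSpace (⋂₀ C) := by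
  have hrep : ∀ K ∈ C, ∃ (I J : Finset ι) (a : ι → ℝ), Disjoint I J ∧ K = halfSpace I J a ∧
      (∀ j ∈ J, a j + u j ≤ 0) ∧ (J.Nonempty → ∃ j ∈ J, a j + u j = 0) := fun K hK => by
    obtain ⟨I, J, c, hIJ, rfl⟩ := (hHS K hK).exists_eq_halfSpace
    obtain ⟨a, ha, hle, hmax⟩ := exists_halfSpace_eq_normalized I J c u
    exact ⟨I, J, a, hIJ, ha.symm, hle, hmax⟩
  choose! I J a hIJ hKa hle hmax using hrep
  obtain ⟨⟨I₀, J₀⟩, hcoin⟩ := hC.exists_coinitial_fiber hne fun K => (I K, J K)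
  set D := {K ∈ C | (I K, J K) = (I₀, J₀)}
  have hDC : D ⊆ C := fun K hK => hK.1
  have hN : NormalizedChain u I₀ J₀ D a := by
    have hpat : ∀ K ∈ D, I K = I₀ ∧ J K = J₀ := fun K hK => Prod.ext_iff.1 hK.2
    refine ⟨?_, hC.mono hDC, ?_, fun K hK => ?_, fun K hK => hu K hK.1, fun K hK => ?_,
      fun K hK => ?_⟩
    · obtain ⟨K, hK, -, hpK⟩ := hcoin _ hne.some_mem
      exact (hpat K ⟨hK, hpK⟩).1 ▸ (hpat K ⟨hK, hpK⟩).2 ▸ hIJ K hK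
    · obtain ⟨K, hK, -, hpK⟩ := hcoin _ hne.some_mem
      exact ⟨K, hK, hpK⟩
    all_goals obtain ⟨rfl, rfl⟩ := hpat K hK
    · exact hKa K hK.1
    · exact hle K hK.1
    · exact hmax K hK.1
  have hDC' : ⋂₀ D = ⋂₀ C := by
    refine subset_antisymm (Set.subset_sInter fun K hK => ?_) (Set.sInter_subset_sInter hDC)
    obtain ⟨K', hK', hsub, hpK'⟩ := hcoin K hK
    exact (Set.sInter_subset_of_mem (show K' ∈ D from ⟨hK', hpK'⟩)).trans hsub
  exact hDC' ▸ hN.isHalfSpace_sInter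

/-- existence of a minimal half-space between a full-support
max-plus cone and a half-space containing it. -/
theorem stmt_7 {n : ℕ} (V : Set (Fin n → Rmax)) (hV : IsTropCone V)
    (hsupp : HasFullSupport V) (H : Set (Fin n → Rmax)) (hHS : IsHalfSpace H)
    (hVH : V ⊆ H) :
    ∃ H' : Set (Fin n → Rmax), IsHalfSpace H' ∧ V ⊆ H' ∧ H' ⊆ H ∧
      ¬ ∃ H'' : Set (Fin n → Rmax), IsHalfSpace H'' ∧ V ⊆ H'' ∧ H'' ⊂ H' := by
  obtain ⟨u, hu⟩ := exists_coe_mem_of_hasFullSupport hV hsupp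
  obtain ⟨M, hMH, hM⟩ := zorn_superset_nonempty {K | IsHalfSpace K ∧ V ⊆ K}
    (fun c hc hchain hne => ⟨⋂₀ c,
      ⟨isHalfSpace_sInter_of_isChain hchain hne (fun K hK => (hc hK).1)
        (fun K hK => hu K (hc hK).1 (hc hK).2), Set.subset_sInter fun K hK => (hc hK).2⟩,
      fun K hK => Set.sInter_subset_of_mem hK⟩) H ⟨hHS, hVH⟩
  refine ⟨M, hM.prop.1, hM.prop.2, hMH, ?_⟩
  rintro ⟨H'', hH'', hVH'', hlt⟩
  exact hlt.not_subset (hM.2 ⟨hH'', hVH''⟩ hlt.subset)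
end
end
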